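/- arXiv:1810.02776 — 2 statements merged into one kernel-verified Lean document; each statement's English description precedes it below -/
import Mathlib

section
/- Let G be the directed graph whose vertices are pairs (V, W) of subspaces of F_qⁿ with dim V + dim W = n and edges (V₁,W₁) → (V₂,W₂) iff V₂ ⊆ W₁. For a set of vertices X = {(V_α, W_α) : α ∈ A}, the target closure cl_t(X) = N⁺(N⁻(X)) equals {(V, W) vertex : V ⊆ span(⋃_α V_α)}, and the source closure cl_s(X) = N⁻(N⁺(X)) equals {(V, W) vertex : ⋂_α W_α ⊆ W}. In particular, every target-closed set is the target closure of a single vertex and every source-closed set is the source closure of a single vertex. -/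
/-- Vertices: pairs `(V, W)` of subspaces of `Fⁿ` with `dim V + dim W = n`. -/
def ThetaVtx (F : Type*) [Field F] (n : ℕ) :=
  {p : Submodule F (Fin n → F) × Submodule F (Fin n → F) //
    Module.finrank F p.1 + Module.finrank F p.2 = n}

/-- Edge `(V₁,W₁) → (V₂,W₂)` iff `V₂ ⊆ W₁`. -/
def ThetaE (F : Type*) [Field F] (n : ℕ) (p r : ThetaVtx F n) : Prop :=
  r.val.1 ≤ p.val.2

/-- Common post-neighbours. -/
def Npost {V : Type*} (E : V → V → Prop) (X : Set V) : Set V :=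
  {v | ∀ x ∈ X, E x v}

/-- Common pre-neighbours. -/
def Npre {V : Type*} (E : V → V → Prop) (X : Set V) : Set V :=
  {v | ∀ x ∈ X, E v x}

/-!
`Npre X` consists of the vertices `(V, W)` with `⨆ V_α ≤ W`, and a vertex `(V, W)` lies in
`Npost (Npre X)` iff `V ≤ W` for all these `W`. Every subspace `U` of `Fⁿ` is the second (or
first) component of a vertex, completed by a complement of `U`; taking `W = ⨆ V_α` shows that
the condition is exactly `V ≤ ⨆ V_α`. The source closure is dual. A closed set is then the
closure of the single vertex with first component `⨆ V_α` (resp. second component `⨅ W_α`).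
-/

namespace ThetaVtx

variable {F : Type*} [Field F] {n : ℕ}

lemma exists_snd_eq (U : Submodule F (Fin n → F)) :
    ∃ v : ThetaVtx F n, v.val.2 = U := by
  obtain ⟨W, hW⟩ := U.exists_isCompl
  refine ⟨⟨(W, U), ?_⟩, rfl⟩
  rw [Submodule.finrank_add_eq_of_isCompl hW.symm, Module.finrank_fin_fun]

lemma exists_fst_eq (U : Submodule F (Fin n → F)) :
    ∃ v : ThetaVtx F n, v.val.1 = U := by
  obtain ⟨W, hW⟩ := U.exists_isCompl
  refine ⟨⟨(U, W), ?_⟩, rfl⟩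
  rw [Submodule.finrank_add_eq_of_isCompl hW, Module.finrank_fin_fun]

lemma npost_npre_thetaE (X : Set (ThetaVtx F n)) :
    Npost (ThetaE F n) (Npre (ThetaE F n) X) = {p | p.val.1 ≤ ⨆ x ∈ X, x.val.1} := by
  ext p
  constructor
  · intro hp
    obtain ⟨w, hw⟩ := exists_snd_eq (⨆ x ∈ X, x.val.1)
    refine (hp w fun x hx => ?_).trans hw.le
    exact (le_biSup (fun x : ThetaVtx F n => x.val.1) hx).trans hw.ge
  · intro hp r hr
    exact hp.trans (iSup₂_le hr)

lemma npre_npost_thetaE (X : Set (ThetaVtx F n)) :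
    Npre (ThetaE F n) (Npost (ThetaE F n) X) = {p | (⨅ x ∈ X, x.val.2) ≤ p.val.2} := by
  ext p
  constructor
  · intro hp
    obtain ⟨v, hv⟩ := exists_fst_eq (⨅ x ∈ X, x.val.2)
    refine hv.ge.trans (hp v fun x hx => ?_)
    exact hv.le.trans (biInf_le (fun x : ThetaVtx F n => x.val.2) hx)
  · intro hp r hr
    exact (le_iInf₂ hr).trans hp

lemma exists_eq_npost_npre_singleton {X : Set (ThetaVtx F n)}
    (hX : Npost (ThetaE F n) (Npre (ThetaE F n) X) = X) :
    ∃ v, X = Npost (ThetaE F n) (Npre (ThetaE F n) {v}) := by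
  obtain ⟨v, hv⟩ := exists_fst_eq (⨆ x ∈ X, x.val.1)
  refine ⟨v, ?_⟩
  rw [← hX, npost_npre_thetaE, npost_npre_thetaE, iSup_singleton, hv]

lemma exists_eq_npre_npost_singleton {X : Set (ThetaVtx F n)}
    (hX : Npre (ThetaE F n) (Npost (ThetaE F n) X) = X) :
    ∃ v, X = Npre (ThetaE F n) (Npost (ThetaE F n) {v}) := by
  obtain ⟨v, hv⟩ := exists_snd_eq (⨅ x ∈ X, x.val.2)
  refine ⟨v, ?_⟩
  rw [← hX, npre_npost_thetaE, npre_npost_thetaE, iInf_singleton, hv]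

end ThetaVtx

open ThetaVtx in
theorem stmt_17_general (n : ℕ)
    (F : Type*) [Field F] :
    (∀ X : Set (ThetaVtx F n),
      Npost (ThetaE F n) (Npre (ThetaE F n) X) =
        {p : ThetaVtx F n | p.val.1 ≤ ⨆ x ∈ X, x.val.1} ∧
      Npre (ThetaE F n) (Npost (ThetaE F n) X) =
        {p : ThetaVtx F n | (⨅ x ∈ X, x.val.2) ≤ p.val.2}) ∧
    (∀ X : Set (ThetaVtx F n),
      Npost (ThetaE F n) (Npre (ThetaE F n) X) = X →
        ∃ v : ThetaVtx F n, X = Npost (ThetaE F n) (Npre (ThetaE F n) ({v} : Set _))) ∧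
    (∀ X : Set (ThetaVtx F n),
      Npre (ThetaE F n) (Npost (ThetaE F n) X) = X →
        ∃ v : ThetaVtx F n, X = Npre (ThetaE F n) (Npost (ThetaE F n) ({v} : Set _))) :=
  ⟨fun X => ⟨npost_npre_thetaE X, npre_npost_thetaE X⟩,
    fun _ => exists_eq_npost_npre_singleton, fun _ => exists_eq_npre_npost_singleton⟩

/-- In the graph of pairs of subspaces, the target closure of `X` is the set of
vertices whose first component lies in the span of the first components of `X`,
the source closure is the set of vertices whose second component contains the
intersection of the second components of `X`; consequently every target-closed
(resp. source-closed) set is the target (resp. source) closure of a single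
vertex. -/
theorem stmt_17 (q n : ℕ) (hq : 1 < q)
    (F : Type*) [Field F] [Fintype F] (hF : Fintype.card F = q) :
    (∀ X : Set (ThetaVtx F n),
      Npost (ThetaE F n) (Npre (ThetaE F n) X) =
        {p : ThetaVtx F n | p.val.1 ≤ ⨆ x ∈ X, x.val.1} ∧
      Npre (ThetaE F n) (Npost (ThetaE F n) X) =
        {p : ThetaVtx F n | (⨅ x ∈ X, x.val.2) ≤ p.val.2}) ∧
    (∀ X : Set (ThetaVtx F n),
      Npost (ThetaE F n) (Npre (ThetaE F n) X) = X →
        ∃ v : ThetaVtx F n, X = Npost (ThetaE F n) (Npre (ThetaE F n) ({v} : Set _))) ∧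
    (∀ X : Set (ThetaVtx F n),
      Npre (ThetaE F n) (Npost (ThetaE F n) X) = X →
        ∃ v : ThetaVtx F n, X = Npre (ThetaE F n) (Npost (ThetaE F n) ({v} : Set _))) :=
  stmt_17_general n F
end

section
/- Let G be the directed graph whose vertices are pairs (V, W) of subspaces of F_qⁿ with dim V + dim W = n and edges (V₁,W₁) → (V₂,W₂) iff V₂ ⊆ W₁. For any two vertices x = (V_x, W_x) and y = (V_y, W_y) with dim V_x = dim V_y = k, the set cl_t(x) ∩ cl_s(y) ∩ {vertices (V,W) with dim V = k} is the singleton {(V_x, W_y)}, where cl_t(x) = N⁺(N⁻({x})) and cl_s(y) = N⁻(N⁺({y})). -/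
namespace ThetaVtx

variable {F : Type*} [Field F] {n : ℕ}

theorem finrank_snd_eq_of_finrank_fst_eq {v w : ThetaVtx F n}
    (h : Module.finrank F v.val.1 = Module.finrank F w.val.1) :
    Module.finrank F v.val.2 = Module.finrank F w.val.2 := by
  have hv := v.2
  have hw := w.2
  omega

/-- `(W, V)` is the largest in-neighbour and the smallest out-neighbour of `(V, W)`,
so `cl_t` and `cl_s` of a single vertex are cut out by one inclusion each. -/
def swap (x : ThetaVtx F n) : ThetaVtx F n :=
  ⟨(x.val.2, x.val.1), by rw [add_comm]; exact x.2⟩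

def glue (x y : ThetaVtx F n)
    (h : Module.finrank F x.val.1 = Module.finrank F y.val.1) : ThetaVtx F n :=
  ⟨(x.val.1, y.val.2), by rw [h]; exact y.2⟩

theorem mem_Npost_Npre_singleton_iff {x v : ThetaVtx F n} :
    v ∈ Npost (ThetaE F n) (Npre (ThetaE F n) {x}) ↔ v.val.1 ≤ x.val.1 := by
  refine ⟨fun hv => hv x.swap fun u hu => ?_, fun hv u hu => ?_⟩
  · rw [Set.mem_singleton_iff.mp hu]
    exact le_rfl
  · exact hv.trans (hu x rfl)

theorem mem_Npre_Npost_singleton_iff {y v : ThetaVtx F n} :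
    v ∈ Npre (ThetaE F n) (Npost (ThetaE F n) {y}) ↔ y.val.2 ≤ v.val.2 := by
  refine ⟨fun hv => hv y.swap fun u hu => ?_, fun hv u hu => ?_⟩
  · rw [Set.mem_singleton_iff.mp hu]
    exact le_rfl
  · exact (hu y rfl).trans hv

end ThetaVtx

theorem stmt_18_general (n k : ℕ)
    (F : Type*) [Field F]
    (x y : ThetaVtx F n)
    (hx : Module.finrank F x.val.1 = k) (hy : Module.finrank F y.val.1 = k) :
    (Npost (ThetaE F n) (Npre (ThetaE F n) ({x} : Set _)) ∩
        Npre (ThetaE F n) (Npost (ThetaE F n) ({y} : Set _)) ∩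
        {v : ThetaVtx F n | Module.finrank F v.val.1 = k}) =
      {v : ThetaVtx F n | v.val = (x.val.1, y.val.2)} ∧
    ∃ v : ThetaVtx F n, v.val = (x.val.1, y.val.2) := by
  refine ⟨Set.ext fun w => ?_, ThetaVtx.glue x y (hx.trans hy.symm), rfl⟩
  simp only [Set.mem_inter_iff, ThetaVtx.mem_Npost_Npre_singleton_iff,
    ThetaVtx.mem_Npre_Npost_singleton_iff, Set.mem_ofPred_eq]
  constructor
  · rintro ⟨⟨hwx, hyw⟩, hw⟩
    have hVw : w.val.1 = x.val.1 := Submodule.eq_of_le_of_finrank_le hwx (by omega)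
    have hWw : y.val.2 = w.val.2 := Submodule.eq_of_le_of_finrank_le hyw
      (ThetaVtx.finrank_snd_eq_of_finrank_fst_eq (hw.trans hy.symm)).le
    exact Prod.ext hVw hWw.symm
  · intro hw
    rw [hw]
    exact ⟨⟨le_rfl, le_rfl⟩, hx⟩

/-- For vertices `x = (V_x, W_x)` and `y = (V_y, W_y)` with
`dim V_x = dim V_y = k`, the set `cl_t(x) ∩ cl_s(y) ∩ {dim V = k}` is the
singleton `{(V_x, W_y)}`. -/
theorem stmt_18 (q n k : ℕ) (hq : 1 < q)
    (F : Type*) [Field F] [Fintype F] (hF : Fintype.card F = q)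
    (x y : ThetaVtx F n)
    (hx : Module.finrank F x.val.1 = k) (hy : Module.finrank F y.val.1 = k) :
    (Npost (ThetaE F n) (Npre (ThetaE F n) ({x} : Set _)) ∩
        Npre (ThetaE F n) (Npost (ThetaE F n) ({y} : Set _)) ∩
        {v : ThetaVtx F n | Module.finrank F v.val.1 = k}) =
      {v : ThetaVtx F n | v.val = (x.val.1, y.val.2)} ∧
    ∃ v : ThetaVtx F n, v.val = (x.val.1, y.val.2) :=
  stmt_18_general n k F x y hx hy
end
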